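/- Let p ⊑_p2p q. For every s ∈ Act*, if p ⇓p2p s and q ⟹^s, then p ⟹^s. -/

import Mathlib

namespace MTP

/-- Processes of infinitary CCS with success.
`pre none p` is `τ.p`, `pre (some a) p` is `a.p`.
`sum f` is a countable sum `Σ_{i∈I} p_i` where `I = {n | f n ≠ none}`. -/
inductive Proc (Act : Type) (Const : Type) : Type where
  | one : Proc Act Const
  | const : Const → Proc Act Const
  | pre : Option Act → Proc Act Const → Proc Act Const
  | sum : (ℕ → Option (Proc Act Const)) → Proc Act Const

namespace Proc
/-- The empty sum `0`. -/
def nil {Act Const : Type} : Proc Act Const := .sum fun _ => none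
/-- Binary external sum `p + q`. -/
def ext {Act Const : Type} (p q : Proc Act Const) : Proc Act Const :=
  .sum fun n => if n = 0 then some p else if n = 1 then some q else none
end Proc

/-- Labels: visible actions, τ, and the success action ✓. -/
inductive Label (Act : Type) : Type where
  | act : Act → Label Act
  | tau : Label Act
  | ok : Label Act

/-- A CCS signature: an involutive complementation on actions, together with
a definition for every constant. -/
structure CCS (Act : Type) (Const : Type) : Type where
  co : Act → Act
  co_invol : ∀ a, co (co a) = a
  defn : Const → Proc Act Const

variable {Act Const : Type}

/-- The transition relation of infinitary CCS with success. -/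
inductive Step (S : CCS Act Const) : Proc Act Const → Label Act → Proc Act Const → Prop where
  | one : Step S .one .ok .nil
  | preAct (a : Act) (p : Proc Act Const) : Step S (.pre (some a) p) (.act a) p
  | preTau (p : Proc Act Const) : Step S (.pre none p) .tau p
  | sum {f : ℕ → Option (Proc Act Const)} {i : ℕ} {p q : Proc Act Const} {l : Label Act} :
      f i = some p → Step S p l q → Step S (.sum f) l q
  | const {A : Const} {l : Label Act} {q : Proc Act Const} :
      Step S (S.defn A) l q → Step S (.const A) l q

/-- `p` can report success. -/
def CanOk (S : CCS Act Const) (p : Proc Act Const) : Prop := ∃ q, Step S p .ok q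

/-- `p` has no τ-transition. -/
def Stable (S : CCS Act Const) (p : Proc Act Const) : Prop := ¬ ∃ q, Step S p .tau q

/-- τ-transitions of a parallel composition `p ∥ r` (server component first). -/
inductive ParTau (S : CCS Act Const) :
    Proc Act Const × Proc Act Const → Proc Act Const × Proc Act Const → Prop where
  | left {p p' r : Proc Act Const} : Step S p .tau p' → ParTau S (p, r) (p', r)
  | right {p r r' : Proc Act Const} : Step S r .tau r' → ParTau S (p, r) (p, r')
  | sync {p p' r r' : Proc Act Const} {a : Act} :
      Step S p (.act a) p' → Step S r (.act (S.co a)) r' → ParTau S (p, r) (p', r')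

/-- A state of a composition is stuck if it has no τ-transition. -/
def StateStuck (S : CCS Act Const) (st : Proc Act Const × Proc Act Const) : Prop :=
  ¬ ∃ t, ParTau S st t

/-- `ρ` encodes a maximal computation: at each stage either a real τ-step is taken, or the
state is stuck and stutters forever (encoding a finite maximal computation). -/
def MaxComp (S : CCS Act Const) (ρ : ℕ → Proc Act Const × Proc Act Const) : Prop :=
  ∀ k, ParTau S (ρ k) (ρ (k + 1)) ∨ (StateStuck S (ρ k) ∧ ρ (k + 1) = ρ k)

/-- `p Must r`: every maximal computation of `p ∥ r` is client-successful. -/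
def Must (S : CCS Act Const) (p r : Proc Act Const) : Prop :=
  ∀ ρ : ℕ → Proc Act Const × Proc Act Const,
    ρ 0 = (p, r) → MaxComp S ρ → ∃ k, CanOk S (ρ k).2

/-- `p MustSC r`: every maximal computation of `p ∥ r` is successful (both components
eventually can report success). -/
def MustSC (S : CCS Act Const) (p r : Proc Act Const) : Prop :=
  ∀ ρ : ℕ → Proc Act Const × Proc Act Const,
    ρ 0 = (p, r) → MaxComp S ρ → (∃ k, CanOk S (ρ k).2) ∧ (∃ l, CanOk S (ρ l).1)

/-- The server testing preorder `p ⊑_svr q`. -/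
def svrLe (S : CCS Act Const) (p q : Proc Act Const) : Prop :=
  ∀ r, Must S p r → Must S q r

/-- The client testing preorder `r₁ ⊑_clt r₂`. -/
def cltLe (S : CCS Act Const) (r₁ r₂ : Proc Act Const) : Prop :=
  ∀ p, Must S p r₁ → Must S p r₂

/-- The peer testing preorder `p ⊑_p2p q`. -/
def p2pLe (S : CCS Act Const) (p q : Proc Act Const) : Prop :=
  ∀ r, MustSC S p r → MustSC S q r

/-- Weak transition `p ⟹^s q` for finite traces `s ∈ Act*`. -/
inductive Weak (S : CCS Act Const) : Proc Act Const → List Act → Proc Act Const → Prop where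
  | refl (p : Proc Act Const) : Weak S p [] p
  | tau {p p' q : Proc Act Const} {s : List Act} :
      Step S p .tau p' → Weak S p' s q → Weak S p s q
  | act {p p' q : Proc Act Const} {a : Act} {s : List Act} :
      Step S p (.act a) p' → Weak S p' s q → Weak S p (a :: s) q

/-- Unsuccessful weak transition `p ⟹̸✓^s q`: as `Weak` but no state passed through
(including the end points) can report success. -/
inductive UWeak (S : CCS Act Const) : Proc Act Const → List Act → Proc Act Const → Prop where
  | refl {p : Proc Act Const} : ¬ CanOk S p → UWeak S p [] p
  | tau {p p' q : Proc Act Const} {s : List Act} :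
      ¬ CanOk S p → Step S p .tau p' → UWeak S p' s q → UWeak S p s q
  | act {p p' q : Proc Act Const} {a : Act} {s : List Act} :
      ¬ CanOk S p → Step S p (.act a) p' → UWeak S p' s q → UWeak S p (a :: s) q

/-- View `Option Act` (`none` = τ) as a label. -/
def optLabel : Option Act → Label Act
  | some a => .act a
  | none => .tau

/-- The length-`n` prefix of an infinite trace `u ∈ Act^∞`. -/
def prefixList (u : ℕ → Act) (n : ℕ) : List Act := List.ofFn fun i : Fin n => u i.1

/-- Infinite weak transition `p ⟹^u` for `u ∈ Act^∞`. -/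
def InfWeak (S : CCS Act Const) (p : Proc Act Const) (u : ℕ → Act) : Prop :=
  ∃ (ρ : ℕ → Proc Act Const) (ℓ : ℕ → Option Act),
    ρ 0 = p ∧ (∀ k, Step S (ρ k) (optLabel (ℓ k)) (ρ (k + 1))) ∧
    ∀ n, ∃ k, (List.range k).filterMap ℓ = prefixList u n

/-- Infinite unsuccessful weak transition `p ⟹̸✓^u` for `u ∈ Act^∞`. -/
def InfUWeak (S : CCS Act Const) (p : Proc Act Const) (u : ℕ → Act) : Prop :=
  ∃ (ρ : ℕ → Proc Act Const) (ℓ : ℕ → Option Act),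
    ρ 0 = p ∧ (∀ k, Step S (ρ k) (optLabel (ℓ k)) (ρ (k + 1))) ∧
    (∀ k, ¬ CanOk S (ρ k)) ∧
    ∀ n, ∃ k, (List.range k).filterMap ℓ = prefixList u n

/-- `p ⇓`: no infinite sequence of τ-transitions from `p`. -/
def Conv (S : CCS Act Const) (p : Proc Act Const) : Prop :=
  ¬ ∃ ρ : ℕ → Proc Act Const, ρ 0 = p ∧ ∀ k, Step S (ρ k) .tau (ρ (k + 1))

/-- `p after s`. -/
def after (S : CCS Act Const) (p : Proc Act Const) (s : List Act) : Set (Proc Act Const) :=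
  {q | Weak S p s q}

/-- `p afterU s`: residuals after unsuccessful traces. -/
def afterU (S : CCS Act Const) (p : Proc Act Const) (s : List Act) : Set (Proc Act Const) :=
  {q | UWeak S p s q}

-- `⊕X = Σ_{x∈X} τ.x` for a nonempty countable set `X` (junk value otherwise).
open scoped Classical in
noncomputable def bigOplus (X : Set (Proc Act Const)) : Proc Act Const :=
  if h : ∃ f : ℕ → Proc Act Const, Set.range f = X then
    Proc.sum fun n => some (.pre none (h.choose n))
  else Proc.nil

/-- The ready set `S(q)`. -/
def ready (S : CCS Act Const) (q : Proc Act Const) : Set Act :=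
  {a | ∃ q', Step S q (.act a) q'}

/-- The acceptance set `A(p, s)`. -/
def acc (S : CCS Act Const) (p : Proc Act Const) (s : List Act) : Set (Set Act) :=
  {A | ∃ q, Weak S p s q ∧ Stable S q ∧ A = ready S q}

/-- The unsuccessful acceptance set `A✗(p, s)`. -/
def accU (S : CCS Act Const) (p : Proc Act Const) (s : List Act) : Set (Set Act) :=
  {A | ∃ q, UWeak S p s q ∧ Stable S q ∧ A = ready S q}

/-- The usable clients. -/
def Uclt (S : CCS Act Const) : Set (Proc Act Const) := {r | ∃ p, Must S p r}

/-- The usable servers. -/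
def Usvr (S : CCS Act Const) : Set (Proc Act Const) := {p | ∃ r, Must S p r}

/-- Client usability along an unsuccessful trace: `r ⇓U s`. -/
def usbU (S : CCS Act Const) : Proc Act Const → List Act → Prop
  | r, [] => r ∈ Uclt S
  | r, a :: s => r ∈ Uclt S ∧ ((∃ q, UWeak S r [a] q) → usbU S (bigOplus (afterU S r [a])) s)

/-- Client usability along an infinite trace. -/
def usbUInf (S : CCS Act Const) (r : Proc Act Const) (u : ℕ → Act) : Prop :=
  ∀ n, usbU S r (prefixList u n)

/-- Usable actions of a client after `s`: `uaU(r, s)`. -/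
def uaU (S : CCS Act Const) (r : Proc Act Const) (s : List Act) : Set Act :=
  {a | (∃ q, UWeak S r (s ++ [a]) q) → usbU S r (s ++ [a])}

/-- Convergence along a trace: `p ⇓ s`. -/
def convAlong (S : CCS Act Const) : Proc Act Const → List Act → Prop
  | p, [] => Conv S p
  | p, a :: s => Conv S p ∧ ((∃ q, Weak S p [a] q) → convAlong S (bigOplus (after S p [a])) s)

/-- Server usability along a trace: `p ⇓U' s`. -/
def usbS (S : CCS Act Const) : Proc Act Const → List Act → Prop
  | p, [] => p ∈ Usvr S
  | p, a :: s => p ∈ Usvr S ∧ ((∃ q, Weak S p [a] q) → usbS S (bigOplus (after S p [a])) s)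

/-- Server convergence `p ⇓svr s`. -/
def convS (S : CCS Act Const) (p : Proc Act Const) (s : List Act) : Prop :=
  convAlong S p s ∧ usbS S p s

/-- Server convergence along an infinite trace. -/
def convSInf (S : CCS Act Const) (p : Proc Act Const) (u : ℕ → Act) : Prop :=
  ∀ n, convS S p (prefixList u n)

/-- Usable actions of a server after `s`: `uaS(p, s)`. -/
def uaS (S : CCS Act Const) (p : Proc Act Const) (s : List Act) : Set Act :=
  {a | (∃ q, Weak S p s q) → usbS S p (s ++ [a])}

/-- Peer convergence `p ⇓p2p s`. -/
def convP (S : CCS Act Const) (p : Proc Act Const) (s : List Act) : Prop :=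
  convAlong S p s ∧ usbU S p s

/-- Peer convergence along an infinite trace. -/
def convPInf (S : CCS Act Const) (p : Proc Act Const) (u : ℕ → Act) : Prop :=
  ∀ n, convP S p (prefixList u n)

/-- The semantic client preorder `r₁ ≼_clt r₂`. -/
def semClt (S : CCS Act Const) (r₁ r₂ : Proc Act Const) : Prop :=
  (∀ s : List Act, usbU S r₁ s →
    usbU S r₂ s ∧ ∀ B ∈ accU S r₂ s, ∃ A ∈ accU S r₁ s, A ∩ uaU S r₁ s ⊆ B) ∧
  (∀ s : List Act, usbU S r₁ s → (∃ q, UWeak S r₂ s q) → ∃ q, UWeak S r₁ s q) ∧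
  (∀ u : ℕ → Act, usbUInf S r₁ u → InfUWeak S r₂ u → InfUWeak S r₁ u)

/-- The semantic server preorder `p ≼_svr q`. -/
def semSvr (S : CCS Act Const) (p q : Proc Act Const) : Prop :=
  (∀ s : List Act, convS S p s →
    convS S q s ∧ ∀ B ∈ acc S q s, ∃ A ∈ acc S p s, A ∩ uaS S p s ⊆ B) ∧
  (∀ s : List Act, convS S p s → (∃ q', Weak S q s q') → ∃ p', Weak S p s p') ∧
  (∀ u : ℕ → Act, convSInf S p u → InfWeak S q u → InfWeak S p u)

/-- The auxiliary semantic peer relation `p ≼'_p2p q`. -/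
def semP2pAux (S : CCS Act Const) (p q : Proc Act Const) : Prop :=
  (∀ s : List Act, convP S p s →
    convAlong S q s ∧ ∀ B ∈ acc S q s, ∃ A ∈ acc S p s, A ∩ uaU S p s ⊆ B) ∧
  (∀ s : List Act, convP S p s → (∃ q', Weak S q s q') → ∃ p', Weak S p s p') ∧
  (∀ u : ℕ → Act, convPInf S p u → InfWeak S q u → InfWeak S p u)

/-- The semantic peer preorder `p ≼_p2p q`. -/
def semP2p (S : CCS Act Const) (p q : Proc Act Const) : Prop :=
  semClt S p q ∧ semP2pAux S p q

end MTP

/-!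
Suppose `p` cannot perform `s`. The client `traceClient S p s` offers the complements of the
actions of `s` one by one, and at every stage may instead leave by `τ` into `1 + τ.w`, where
`w Must b` for `b` the `⊕` of the current unsuccessful residuals of `p` (such a `w` exists because
`p ⇓U s`). Since `p ⇓ s` and `p` cannot complete `s`, in every maximal computation of
`p ∥ traceClient S p s` the client eventually leaves, and so succeeds; the server is then an
unsuccessful residual of `b`, so running against `w` forces it to succeed too. Hence
`p MustSC traceClient S p s`, so `q MustSC traceClient S p s`; but when `q` performs `s` in
lock-step with the client, no state of the client ever reports success.
-/

namespace MTP

variable {Act Const : Type} {S : CCS Act Const}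

theorem Step.not_nil {l : Label Act} {q : Proc Act Const} : ¬ Step S Proc.nil l q := by
  rintro (_ | _ | _ | ⟨hf, -⟩)
  simp at hf

theorem step_ext_iff {p q y : Proc Act Const} {l : Label Act} :
    Step S (Proc.ext p q) l y ↔ Step S p l y ∨ Step S q l y := by
  constructor
  · rintro (_ | _ | _ | @⟨_, i, _, _, _, hf, hs⟩)
    rcases i with _ | _ | i <;> simp at hf <;> subst hf
    · exact .inl hs
    · exact .inr hs
  · rintro (h | h)
    · exact .sum (i := 0) rfl h
    · exact .sum (i := 1) rfl h

/-- Indexes the derivatives of `p` by the countable type `ℕ × List ℕ`: the summand choices `ks`,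
and fuel `n` for unfolding constants. -/
def derivativeAlong (S : CCS Act Const) : ℕ → Proc Act Const → List ℕ → Option (Proc Act Const)
  | _ + 1, .one, [] => some .nil
  | _ + 1, .pre _ r, [] => some r
  | n + 1, .const A, ks => derivativeAlong S n (S.defn A) ks
  | n + 1, .sum g, i :: ks => (g i).bind fun r => derivativeAlong S n r ks
  | _, _, _ => none

theorem Step.exists_derivativeAlong {p q : Proc Act Const} {l : Label Act} (h : Step S p l q) :
    ∃ n ks, derivativeAlong S n p ks = some q := by
  induction h with
  | one => exact ⟨1, [], rfl⟩
  | preAct => exact ⟨1, [], rfl⟩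
  | preTau => exact ⟨1, [], rfl⟩
  | @sum f i _ _ _ hf _ ih =>
    obtain ⟨n, ks, h⟩ := ih
    exact ⟨n + 1, i :: ks, by simp [derivativeAlong, hf, h]⟩
  | const _ ih =>
    obtain ⟨n, ks, h⟩ := ih
    exact ⟨n + 1, ks, h⟩

theorem countable_derivatives (S : CCS Act Const) (p : Proc Act Const) :
    {q | ∃ l, Step S p l q}.Countable := by
  refine ((Set.countable_range fun nks : ℕ × List ℕ => derivativeAlong S nks.1 p nks.2).preimage
    (Option.some_injective _)).mono ?_
  rintro q ⟨l, h⟩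
  obtain ⟨n, ks, h⟩ := h.exists_derivativeAlong
  exact ⟨(n, ks), h⟩

def reachWithin (S : CCS Act Const) : ℕ → Proc Act Const → Set (Proc Act Const)
  | 0, p => {p}
  | n + 1, p => insert p (⋃ p' ∈ {p' | ∃ l, Step S p l p'}, reachWithin S n p')

theorem reachWithin_countable (S : CCS Act Const) (n : ℕ) (p : Proc Act Const) :
    (reachWithin S n p).Countable := by
  induction n generalizing p with
  | zero => exact Set.countable_singleton p
  | succ n ih => exact ((countable_derivatives S p).biUnion fun p' _ => ih p').insert p

theorem Weak.exists_mem_reachWithin {p q : Proc Act Const} {s : List Act} (h : Weak S p s q) :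
    ∃ n, q ∈ reachWithin S n p := by
  induction h with
  | refl => exact ⟨0, rfl⟩
  | tau hst _ ih | act hst _ ih =>
    obtain ⟨n, hn⟩ := ih
    exact ⟨n + 1, .inr (Set.mem_biUnion ⟨_, hst⟩ hn)⟩

theorem after_countable (S : CCS Act Const) (p : Proc Act Const) (s : List Act) :
    (after S p s).Countable :=
  (Set.countable_iUnion fun n => reachWithin_countable S n p).mono fun _ h =>
    Set.mem_iUnion.2 (Weak.exists_mem_reachWithin h)

theorem UWeak.weak {p q : Proc Act Const} {s : List Act} (h : UWeak S p s q) : Weak S p s q := by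
  induction h with
  | refl => exact .refl _
  | tau _ hst _ ih => exact .tau hst ih
  | act _ hst _ ih => exact .act hst ih

theorem afterU_countable (S : CCS Act Const) (p : Proc Act Const) (s : List Act) :
    (afterU S p s).Countable :=
  (after_countable S p s).mono fun _ => UWeak.weak

theorem step_bigOplus {X : Set (Proc Act Const)} {x : Proc Act Const} (hX : X.Countable)
    (hx : x ∈ X) : Step S (bigOplus X) .tau x := by
  have hrange : ∃ f : ℕ → Proc Act Const, Set.range f = X := by
    obtain ⟨f, hf⟩ := hX.exists_eq_range ⟨x, hx⟩
    exact ⟨f, hf.symm⟩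
  obtain ⟨n, hn⟩ : x ∈ Set.range hrange.choose := hrange.choose_spec.symm ▸ hx
  rw [bigOplus, dif_pos hrange]
  exact .sum (i := n) rfl (hn ▸ .preTau _)

theorem not_canOk_bigOplus (X : Set (Proc Act Const)) : ¬ CanOk S (bigOplus X) := by
  rintro ⟨q, hq⟩
  unfold bigOplus at hq
  split_ifs at hq
  · rcases hq with _ | _ | _ | ⟨hf, hs⟩
    cases hf
    cases hs
  · exact Step.not_nil hq

theorem Weak.bigOplus_after {c x : Proc Act Const} {s : List Act} (h : Weak S c s x) :
    Weak S (bigOplus (after S c s)) [] x :=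
  .tau (step_bigOplus (after_countable S c s) h) (.refl x)

theorem UWeak.bigOplus_afterU {b x : Proc Act Const} {s : List Act} (h : UWeak S b s x)
    (hx : ¬ CanOk S x) : UWeak S (bigOplus (afterU S b s)) [] x :=
  .tau (not_canOk_bigOplus _) (step_bigOplus (afterU_countable S b s) h) (.refl hx)

theorem Weak.snoc_tau {x y z : Proc Act Const} {s : List Act} (h : Weak S x s y)
    (hst : Step S y .tau z) : Weak S x s z := by
  induction h with
  | refl => exact .tau hst (.refl z)
  | tau h₁ _ ih => exact .tau h₁ (ih hst)
  | act h₁ _ ih => exact .act h₁ (ih hst)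

theorem Weak.snoc_act {x y z : Proc Act Const} {s : List Act} {a : Act} (h : Weak S x s y)
    (hst : Step S y (.act a) z) : Weak S x (s ++ [a]) z := by
  induction h with
  | refl => exact .act hst (.refl z)
  | tau h₁ _ ih => exact .tau h₁ (ih hst)
  | act h₁ _ ih => exact .act h₁ (ih hst)

theorem UWeak.snoc_tau {x y z : Proc Act Const} {s : List Act} (h : UWeak S x s y)
    (hst : Step S y .tau z) (hz : ¬ CanOk S z) : UWeak S x s z := by
  induction h with
  | refl hn => exact .tau hn hst (.refl hz)
  | tau hn h₁ _ ih => exact .tau hn h₁ (ih hst)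
  | act hn h₁ _ ih => exact .act hn h₁ (ih hst)

theorem UWeak.snoc_act {x y z : Proc Act Const} {s : List Act} {a : Act} (h : UWeak S x s y)
    (hst : Step S y (.act a) z) (hz : ¬ CanOk S z) : UWeak S x (s ++ [a]) z := by
  induction h with
  | refl hn => exact .act hn hst (.refl hz)
  | tau hn h₁ _ ih => exact .tau hn h₁ (ih hst)
  | act hn h₁ _ ih => exact .act hn h₁ (ih hst)

theorem conv_iff_acc {p : Proc Act Const} :
    Conv S p ↔ Acc (fun y x => Step S x .tau y) p := by
  rw [Conv, not_iff_comm]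
  exact not_acc_iff_exists_descending_chain

theorem Weak.acc_of_nil {x y : Proc Act Const} {s : List Act} (h : Weak S x s y) (hs : s = [])
    (hx : Acc (fun y x => Step S x .tau y) x) : Acc (fun y x => Step S x .tau y) y := by
  induction h with
  | refl => exact hx
  | tau hst _ ih => exact ih hs (hx.inv hst)
  | act => cases hs

def AlwaysReaches (S : CCS Act Const) (P : Proc Act Const × Proc Act Const → Prop)
    (st : Proc Act Const × Proc Act Const) : Prop :=
  ∀ ρ : ℕ → Proc Act Const × Proc Act Const, ρ 0 = st → MaxComp S ρ → ∃ k, P (ρ k)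

theorem must_iff_alwaysReaches {p r : Proc Act Const} :
    Must S p r ↔ AlwaysReaches S (fun st => CanOk S st.2) (p, r) :=
  Iff.rfl

theorem mustSC_iff {p r : Proc Act Const} :
    MustSC S p r ↔ AlwaysReaches S (fun st => CanOk S st.2) (p, r) ∧
      AlwaysReaches S (fun st => CanOk S st.1) (p, r) :=
  ⟨fun h => ⟨fun ρ h₀ hρ => (h ρ h₀ hρ).1, fun ρ h₀ hρ => (h ρ h₀ hρ).2⟩,
    fun h ρ h₀ hρ => ⟨h.1 ρ h₀ hρ, h.2 ρ h₀ hρ⟩⟩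

namespace AlwaysReaches

variable {P : Proc Act Const × Proc Act Const → Prop} {st t : Proc Act Const × Proc Act Const}

theorem of_holds (h : P st) : AlwaysReaches S P st := fun _ h₀ _ => ⟨0, h₀ ▸ h⟩

theorem of_forall_parTau (hst : ¬ StateStuck S st)
    (h : ∀ t, ParTau S st t → AlwaysReaches S P t) : AlwaysReaches S P st := by
  intro ρ h₀ hρ
  have hstep : ParTau S st (ρ 1) := by
    rcases hρ 0 with h₁ | ⟨hstuck, -⟩
    · exact h₀ ▸ h₁
    · exact absurd (h₀ ▸ hstuck) hst
  obtain ⟨k, hk⟩ := h _ hstep (fun k => ρ (1 + k)) rfl fun k => hρ (1 + k)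
  exact ⟨1 + k, hk⟩

theorem of_parTau (h : AlwaysReaches S P st) (hP : ¬ P st) (hstep : ParTau S st t) :
    AlwaysReaches S P t := by
  intro ρ h₀ hρ
  let ρ' : ℕ → Proc Act Const × Proc Act Const := fun | 0 => st | k + 1 => ρ k
  obtain ⟨_ | k, hk⟩ := h ρ' rfl fun
    | 0 => .inl (show ParTau S st (ρ 0) by rw [h₀]; exact hstep)
    | k + 1 => hρ k
  · exact absurd hk hP
  · exact ⟨k, hk⟩

theorem swap (h : AlwaysReaches S P st) : AlwaysReaches S (P ∘ Prod.swap) st.swap := by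
  have parTau_swap : ∀ {u v}, ParTau S u v → ParTau S u.swap v.swap := by
    rintro _ _ (h | h | ⟨h₁, h₂⟩)
    · exact .right h
    · exact .left h
    · exact .sync h₂ ((S.co_invol _).symm ▸ h₁)
  intro ρ h₀ hρ
  refine h (fun k => (ρ k).swap) (by simp [h₀]) fun k => ?_
  rcases hρ k with h | ⟨hstuck, heq⟩
  · exact .inl (parTau_swap h)
  · exact .inr ⟨fun ⟨v, hv⟩ => hstuck ⟨v.swap, parTau_swap hv⟩, by simp only [heq]⟩

theorem not_of_invariant (I : Proc Act Const × Proc Act Const → Prop) (hI : I st)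
    (hP : ∀ u, I u → ¬ P u) (hnext : ∀ u, I u → ¬ StateStuck S u → ∃ v, I v ∧ ParTau S u v) :
    ¬ AlwaysReaches S P st := by
  classical
  choose! next hnextI hnextStep using hnext
  let f : Proc Act Const × Proc Act Const → Proc Act Const × Proc Act Const :=
    fun u => if StateStuck S u then u else next u
  have hIρ : ∀ k, I (f^[k] st) := by
    intro k
    induction k with
    | zero => exact hI
    | succ k ih =>
      rw [Function.iterate_succ_apply']
      by_cases hstuck : StateStuck S (f^[k] st)
      · simpa [f, hstuck] using ih
      · simpa [f, hstuck] using hnextI _ ih hstuck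
  intro h
  obtain ⟨k, hk⟩ := h (fun k => f^[k] st) rfl fun k => by
    simp only [Function.iterate_succ_apply']
    by_cases hstuck : StateStuck S (f^[k] st)
    · exact .inr ⟨hstuck, by simp [f, hstuck]⟩
    · exact .inl (by simpa [f, hstuck] using hnextStep _ (hIρ k) hstuck)
  exact hP _ (hIρ k) hk

end AlwaysReaches

open Classical in
noncomputable def usableServer (S : CCS Act Const) (b : Proc Act Const) : Proc Act Const :=
  if h : ∃ p, Must S p b then h.choose else Proc.nil

theorem must_usableServer {b : Proc Act Const} (hb : b ∈ Uclt S) :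
    Must S (usableServer S b) b := by
  have hb : ∃ p, Must S p b := hb
  rw [usableServer, dif_pos hb]
  exact hb.choose_spec

noncomputable def exitClient (S : CCS Act Const) (b : Proc Act Const) : Proc Act Const :=
  Proc.ext .one (.pre none (usableServer S b))

noncomputable def traceClient (S : CCS Act Const) : Proc Act Const → List Act → Proc Act Const
  | _, [] => Proc.nil
  | b, a :: t =>
    Proc.ext (.pre (some (S.co a)) (traceClient S (bigOplus (afterU S b [a])) t))
      (.pre none (exitClient S b))

theorem canOk_exitClient (b : Proc Act Const) : CanOk S (exitClient S b) :=
  ⟨_, step_ext_iff.2 (.inl .one)⟩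

theorem exitClient_step_tau (b : Proc Act Const) :
    Step S (exitClient S b) .tau (usableServer S b) :=
  step_ext_iff.2 (.inr (.preTau _))

theorem eq_of_exitClient_step_tau {b z : Proc Act Const}
    (h : Step S (exitClient S b) .tau z) : z = usableServer S b := by
  rcases step_ext_iff.1 h with h | h <;> cases h
  rfl

theorem exitClient_not_step_act {b z : Proc Act Const} {c : Act} :
    ¬ Step S (exitClient S b) (.act c) z := by
  intro h
  rcases step_ext_iff.1 h with h | h <;> cases h

theorem not_canOk_traceClient (b : Proc Act Const) (t : List Act) :
    ¬ CanOk S (traceClient S b t) := by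
  rintro ⟨q, hq⟩
  cases t with
  | nil => exact Step.not_nil hq
  | cons a t => rcases step_ext_iff.1 hq with h | h <;> cases h

theorem traceClient_step_tau (b : Proc Act Const) (a : Act) (t : List Act) :
    Step S (traceClient S b (a :: t)) .tau (exitClient S b) :=
  step_ext_iff.2 (.inr (.preTau _))

theorem traceClient_step_co (b : Proc Act Const) (a : Act) (t : List Act) :
    Step S (traceClient S b (a :: t)) (.act (S.co a))
      (traceClient S (bigOplus (afterU S b [a])) t) :=
  step_ext_iff.2 (.inl (.preAct _ _))

theorem eq_of_traceClient_step_tau {b z : Proc Act Const} {a : Act} {t : List Act}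
    (h : Step S (traceClient S b (a :: t)) .tau z) : z = exitClient S b := by
  rcases step_ext_iff.1 h with h | h <;> cases h
  rfl

theorem eq_of_traceClient_step_co {b z : Proc Act Const} {a c : Act} {t : List Act}
    (h : Step S (traceClient S b (a :: t)) (.act (S.co c)) z) :
    c = a ∧ z = traceClient S (bigOplus (afterU S b [a])) t := by
  rcases step_ext_iff.1 h with h | h
  · generalize hl : Label.act (S.co c) = l at h
    cases h
    refine ⟨?_, rfl⟩
    rw [← S.co_invol c, Label.act.inj hl, S.co_invol]
  · cases h

theorem alwaysReaches_canOk_fst_of_must {w b x : Proc Act Const} {s : List Act}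
    (hw : Must S w b) (hx : UWeak S b s x) (hs : s = []) :
    AlwaysReaches S (fun st => CanOk S st.1) (x, w) := by
  rw [must_iff_alwaysReaches] at hw
  induction hx with
  | refl => exact hw.swap
  | tau hb hst _ ih => exact ih (hw.of_parTau hb (.right hst)) hs
  | act => cases hs

theorem alwaysReaches_canOk_fst_exitClient {b x : Proc Act Const} (hb : b ∈ Uclt S)
    (hx : UWeak S b [] x) (hacc : Acc (fun y x => Step S x .tau y) x) :
    AlwaysReaches S (fun st => CanOk S st.1) (x, exitClient S b) := by
  induction hacc with
  | intro x _ ih =>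
    refine .of_forall_parTau (fun h => h ⟨_, .right (exitClient_step_tau b)⟩) ?_
    rintro _ (@⟨_, x', _, hx'⟩ | ⟨hr⟩ | ⟨-, hr⟩)
    · by_cases hok : CanOk S x'
      · exact .of_holds hok
      · exact ih x' hx' (hx.snoc_tau hx' hok)
    · rw [eq_of_exitClient_step_tau hr]
      exact alwaysReaches_canOk_fst_of_must (must_usableServer hb) hx rfl
    · exact absurd hr exitClient_not_step_act

theorem alwaysReaches_canOk_snd_traceClient {b c x : Proc Act Const} {t : List Act}
    (hc : convAlong S c t) (hcx : Weak S c [] x) (htr : ¬ ∃ z, Weak S x t z) :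
    AlwaysReaches S (fun st => CanOk S st.2) (x, traceClient S b t) := by
  induction t generalizing b c x with
  | nil => exact absurd ⟨x, .refl x⟩ htr
  | cons a t ih =>
    have hacc := hcx.acc_of_nil rfl (conv_iff_acc.1 hc.1)
    induction hacc with
    | intro x _ ihx =>
      refine .of_forall_parTau (fun h => h ⟨_, .right (traceClient_step_tau b a t)⟩) ?_
      rintro _ (@⟨_, x', _, hx'⟩ | ⟨hr⟩ | @⟨_, x', _, _, _, hx', hr⟩)
      · exact ihx x' hx' (hcx.snoc_tau hx') fun ⟨z, hz⟩ => htr ⟨z, .tau hx' hz⟩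
      · rw [eq_of_traceClient_step_tau hr]
        exact .of_holds (canOk_exitClient b)
      · obtain ⟨rfl, rfl⟩ := eq_of_traceClient_step_co hr
        have hcx' : Weak S c [_] x' := hcx.snoc_act hx'
        exact ih (hc.2 ⟨x', hcx'⟩) hcx'.bigOplus_after fun ⟨z, hz⟩ => htr ⟨z, .act hx' hz⟩

theorem alwaysReaches_canOk_fst_traceClient {b c x : Proc Act Const} {t : List Act}
    (hb : usbU S b t) (hc : convAlong S c t) (hcx : Weak S c [] x) (hbx : UWeak S b [] x)
    (htr : ¬ ∃ z, Weak S x t z) :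
    AlwaysReaches S (fun st => CanOk S st.1) (x, traceClient S b t) := by
  induction t generalizing b c x with
  | nil => exact absurd ⟨x, .refl x⟩ htr
  | cons a t ih =>
    have hacc := hcx.acc_of_nil rfl (conv_iff_acc.1 hc.1)
    induction hacc with
    | intro x hacc ihx =>
      refine .of_forall_parTau (fun h => h ⟨_, .right (traceClient_step_tau b a t)⟩) ?_
      rintro _ (@⟨_, x', _, hx'⟩ | ⟨hr⟩ | @⟨_, x', _, _, _, hx', hr⟩)
      · by_cases hok : CanOk S x'
        · exact .of_holds hok
        exact ihx x' hx' (hcx.snoc_tau hx') (hbx.snoc_tau hx' hok)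
          fun ⟨z, hz⟩ => htr ⟨z, .tau hx' hz⟩
      · rw [eq_of_traceClient_step_tau hr]
        exact alwaysReaches_canOk_fst_exitClient hb.1 hbx (.intro x hacc)
      · obtain ⟨rfl, rfl⟩ := eq_of_traceClient_step_co hr
        by_cases hok : CanOk S x'
        · exact .of_holds hok
        have hcx' : Weak S c [_] x' := hcx.snoc_act hx'
        have hbx' : UWeak S b [_] x' := hbx.snoc_act hx' hok
        exact ih (hb.2 ⟨x', hbx'⟩) (hc.2 ⟨x', hcx'⟩) hcx'.bigOplus_after
          (hbx'.bigOplus_afterU hok) fun ⟨z, hz⟩ => htr ⟨z, .act hx' hz⟩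

theorem mustSC_traceClient {p : Proc Act Const} {s : List Act} (hp : convP S p s)
    (htr : ¬ ∃ p', Weak S p s p') : MustSC S p (traceClient S p s) := by
  refine mustSC_iff.2 ⟨alwaysReaches_canOk_snd_traceClient hp.1 (.refl p) htr, ?_⟩
  by_cases hok : CanOk S p
  · exact .of_holds hok
  · exact alwaysReaches_canOk_fst_traceClient hp.2 hp.1 (.refl p) (.refl hok) htr

theorem not_alwaysReaches_canOk_snd_traceClient {q q' : Proc Act Const} {s : List Act}
    (hq : Weak S q s q') (b : Proc Act Const) :
    ¬ AlwaysReaches S (fun st => CanOk S st.2) (q, traceClient S b s) := by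
  refine AlwaysReaches.not_of_invariant
    (fun st => ∃ b u, st.2 = traceClient S b u ∧ ∃ y, Weak S st.1 u y) ⟨b, s, rfl, q', hq⟩
    (fun _ ⟨b, u, hu, _⟩ => hu ▸ not_canOk_traceClient b u) ?_
  rintro ⟨x, _⟩ ⟨b, u, rfl, y, hy⟩ hstuck
  cases hy with
  | refl =>
    obtain ⟨_, hx' | hr | ⟨-, hr⟩⟩ := not_not.1 hstuck
    · exact ⟨_, ⟨b, [], rfl, _, .refl _⟩, .left hx'⟩
    all_goals exact absurd hr Step.not_nil
  | tau hst hy => exact ⟨_, ⟨b, _, rfl, _, hy⟩, .left hst⟩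
  | act hst hy => exact ⟨_, ⟨_, _, rfl, _, hy⟩, .sync hst (traceClient_step_co b _ _)⟩

end MTP

/-- Lemma 5.8: the peer preorder reflects finite traces along which the smaller
peer peer-converges. -/
theorem p2pLe_reflects_traces {Act Const : Type} (S : MTP.CCS Act Const)
    (p q : MTP.Proc Act Const) (s : List Act)
    (hLe : MTP.p2pLe S p q)
    (hConv : MTP.convP S p s)
    (hW : ∃ q', MTP.Weak S q s q') :
    ∃ p', MTP.Weak S p s p' := by
  by_contra hp
  obtain ⟨q', hq⟩ := hW
  have hqPasses := MTP.mustSC_iff.1 (hLe _ (MTP.mustSC_traceClient hConv hp))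
  exact MTP.not_alwaysReaches_canOk_snd_traceClient hq p hqPasses.1
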